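/- arXiv:1810.02180 — 3 statements merged into one kernel-verified Lean document; each statement's English description precedes it below -/
import Mathlib

section
/- Let H ⊆ ℝ^X be a real-valued function class and let L¹_H = {(x,y) ↦ |h(x) − y| : h ∈ H} be its L1 loss class on X × ℝ. Then fat_γ(L¹_H) ≤ 8·fat_γ(H) for every γ > 0. -/
/-- `F` γ-shatters some set of `m` points (with an arbitrary shift `r`). -/
def FatShatters {X : Type*} (F : Set (X → ℝ)) (γ : ℝ) (m : ℕ) : Prop :=
  ∃ x : Fin m → X, Function.Injective x ∧ ∃ r : Fin m → ℝ,
    ∀ b : Fin m → Bool, ∃ f ∈ F, ∀ i,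
      (b i = true → r i + γ ≤ f (x i)) ∧ (b i = false → f (x i) ≤ r i - γ)

/-- `F` γ-shatters some set of `m` points at zero (shift constrained to `0`). -/
def FatShatters0 {X : Type*} (F : Set (X → ℝ)) (γ : ℝ) (m : ℕ) : Prop :=
  ∃ x : Fin m → X, Function.Injective x ∧
    ∀ b : Fin m → Bool, ∃ f ∈ F, ∀ i,
      (b i = true → γ ≤ f (x i)) ∧ (b i = false → f (x i) ≤ -γ)

/-- γ-fat-shattering dimension. -/
noncomputable def fatDim {X : Type*} (F : Set (X → ℝ)) (γ : ℝ) : ℕ :=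
  sSup {m | FatShatters F γ m}

/-- γ-fat-shattering dimension at zero. -/
noncomputable def fatDim0 {X : Type*} (F : Set (X → ℝ)) (γ : ℝ) : ℕ :=
  sSup {m | FatShatters0 F γ m}

/-- The `L¹` loss class of `H` on `X × ℝ`. -/
def l1LossClass {X : Type*} (H : Set (X → ℝ)) : Set (X × ℝ → ℝ) :=
  (fun h => fun p => |h p.1 - p.2|) '' H

open Finset in
private lemma my_sum_choose_bound (N d : ℕ) (hdN : d ≤ N) :
    (∑ k ∈ Iic d, N.choose k) * 16 ^ (N - d) ≤ 17 ^ N := by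
  have h1 : (∑ k ∈ Iic d, N.choose k) * 16 ^ (N - d)
      ≤ ∑ k ∈ Iic d, N.choose k * 16 ^ (N - k) := by
    rw [Finset.sum_mul]
    refine Finset.sum_le_sum fun k hk => ?_
    exact Nat.mul_le_mul_left _
      (Nat.pow_le_pow_right (by norm_num) (Nat.sub_le_sub_left (mem_Iic.1 hk) N))
  have h2 : ∑ k ∈ Iic d, N.choose k * 16 ^ (N - k)
      ≤ ∑ k ∈ Iic N, N.choose k * 16 ^ (N - k) :=
    Finset.sum_le_sum_of_subset (Iic_subset_Iic.2 hdN)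
  have h3 : ∑ k ∈ Iic N, N.choose k * 16 ^ (N - k) = 17 ^ N := by
    have hb := add_pow (1 : ℕ) 16 N
    simp only [one_pow, one_mul] at hb
    rw [show (17:ℕ) = 1 + 16 from rfl, hb]
    rw [show Iic N = range (N+1) by ext k; simp [Nat.lt_succ_iff]]
    exact Finset.sum_congr rfl fun k hk => by push_cast; ring
  omega

private lemma my_arith (m d : ℕ) (h8 : 8 * d + 1 ≤ m) :
    17 ^ (2 * m) < 2 ^ m * 16 ^ (2 * m - d) := by
  have hE : 2 ^ m * 16 ^ (2 * m - d) = 2 ^ (m + 4 * (2 * m - d)) := by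
    rw [pow_add, show (16:ℕ) = 2^4 from rfl, ← pow_mul]
  rw [hE]
  have hsq : (17 ^ (2 * m)) ^ 2 < (2 ^ (m + 4 * (2 * m - d))) ^ 2 := by
    rw [← pow_mul, ← pow_mul]
    have h17 : 17 ^ (2 * m * 2) = 83521 ^ m := by
      rw [show 2 * m * 2 = 4 * m by ring, pow_mul]; norm_num
    rw [h17]
    calc 83521 ^ m < 131072 ^ m :=
          Nat.pow_lt_pow_left (by norm_num) (by omega)
      _ = 2 ^ (17 * m) := by rw [pow_mul]; norm_num
      _ ≤ 2 ^ ((m + 4 * (2 * m - d)) * 2) := Nat.pow_le_pow_right (by norm_num) (by omega)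
  exact lt_of_pow_lt_pow_left₀ 2 (Nat.zero_le _) hsq

theorem fat_l1LossClass_le {X : Type*} (H : Set (X → ℝ)) (γ : ℝ) (hγ : 0 < γ)
    (hbdd : BddAbove {m | FatShatters H γ m}) :
    ∀ m : ℕ, FatShatters (l1LossClass H) γ m → m ≤ 8 * fatDim H γ := by
  classical
  intro m hm
  by_contra hcon
  push_neg at hcon
  set d := fatDim H γ with hd
  have hm8 : 8 * d + 1 ≤ m := hcon
  obtain ⟨p, hpinj, r, hsh⟩ := hm
  have hch : ∀ b : Fin m → Bool, ∃ h ∈ H, ∀ i,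
      (b i = true → r i + γ ≤ |h (p i).1 - (p i).2|) ∧
      (b i = false → |h (p i).1 - (p i).2| ≤ r i - γ) := by
    intro b
    obtain ⟨f, hf, hfp⟩ := hsh b
    obtain ⟨h, hh, rfl⟩ := hf
    exact ⟨h, hh, hfp⟩
  choose h hhH hprop using hch
  have hr : ∀ i, γ ≤ r i := by
    intro i
    have h2 := (hprop (fun _ => false) i).2 rfl
    have h0 : (0:ℝ) ≤ |h (fun _ => false) (p i).1 - (p i).2| := abs_nonneg _
    linarith
  -- the binary encoding
  set S : (Fin m → Bool) → Finset (Fin m × Bool) := fun b =>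
    Finset.univ.filter (fun q => b q.1 = true ∧
      if q.2 then (p q.1).2 + r q.1 + γ ≤ h b (p q.1).1
      else h b (p q.1).1 ≤ (p q.1).2 - r q.1 - γ) with hS
  have hmemS : ∀ b q, q ∈ S b ↔ (b q.1 = true ∧
      if q.2 then (p q.1).2 + r q.1 + γ ≤ h b (p q.1).1
      else h b (p q.1).1 ≤ (p q.1).2 - r q.1 - γ) := by
    intro b q; simp [hS]
  have hone : ∀ b i, b i = true → ((i, true) ∈ S b ∨ (i, false) ∈ S b) := by
    intro b i hbi
    have h1 := (hprop b i).1 hbi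
    rcases le_abs.mp h1 with h2 | h2
    · refine Or.inl ((hmemS b (i, true)).2 ⟨hbi, ?_⟩)
      rw [if_pos rfl]; linarith
    · refine Or.inr ((hmemS b (i, false)).2 ⟨hbi, ?_⟩)
      rw [if_neg Bool.false_ne_true]; linarith
  have hnotboth : ∀ b i, ¬((i, true) ∈ S b ∧ (i, false) ∈ S b) := by
    rintro b i ⟨h1, h2⟩
    have e1 := ((hmemS b (i, true)).1 h1).2
    have e2 := ((hmemS b (i, false)).1 h2).2
    rw [if_pos rfl] at e1
    rw [if_neg Bool.false_ne_true] at e2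
    have := hr i
    linarith
  have hSinj : Function.Injective S := by
    intro b b' hbb'
    funext i
    have key : ∀ c c' : Fin m → Bool, S c = S c' → c i = true → c' i = true := by
      intro c c' hcc' hci
      rcases hone c i hci with hin | hin <;>
      · rw [hcc'] at hin
        exact ((hmemS c' _).1 hin).1
    cases hbi : b i <;> cases hbi' : b' i
    · rfl
    · exact absurd (key b' b hbb'.symm hbi') (by simp [hbi])
    · exact absurd (key b b' hbb' hbi) (by simp [hbi'])
    · rfl
  set 𝒜 : Finset (Finset (Fin m × Bool)) := Finset.image S Finset.univ with h𝒜
  have hcard𝒜 : 𝒜.card = 2 ^ m := by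
    rw [h𝒜, Finset.card_image_of_injective _ hSinj, Finset.card_univ]
    simp
  -- every set shattered by 𝒜 gives fat-shattering of H
  have key : ∀ T : Finset (Fin m × Bool), 𝒜.Shatters T → FatShatters H γ T.card := by
    intro T hT
    set k := T.card with hk
    set e : Fin k → Fin m × Bool := fun j => (T.equivFin.symm j : Fin m × Bool) with he
    have heinj : Function.Injective e :=
      fun a b hab => T.equivFin.symm.injective (Subtype.val_injective hab)
    have heT : ∀ j, e j ∈ T := fun j => (T.equivFin.symm j).2
    set xx : Fin k → X := fun j => (p (e j).1).1 with hxx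
    set rr : Fin k → ℝ := fun j =>
      (p (e j).1).2 + (if (e j).2 then r (e j).1 else -(r (e j).1)) with hrr
    have helper : ∀ c : Fin k → Bool, ∃ g ∈ H, ∀ j,
        (c j = true → rr j + γ ≤ g (xx j)) ∧ (c j = false → g (xx j) ≤ rr j - γ) := by
      intro c
      set U : Finset (Fin m × Bool) :=
        (Finset.univ.filter (fun j : Fin k => c j = (e j).2)).image e with hU
      have hUT : U ⊆ T := by
        intro q hq
        obtain ⟨j, _, rfl⟩ := Finset.mem_image.1 hq
        exact heT j
      obtain ⟨u, hu, hTu⟩ := hT hUT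
      obtain ⟨b, -, rfl⟩ := Finset.mem_image.1 hu
      refine ⟨h b, hhH b, fun j => ?_⟩
      have hjel : c j = (e j).2 → e j ∈ S b := by
        intro hcj
        have : e j ∈ U := Finset.mem_image.2 ⟨j, Finset.mem_filter.2 ⟨Finset.mem_univ _, hcj⟩, rfl⟩
        rw [← hTu] at this
        exact (Finset.mem_inter.1 this).2
      have hjnotel : c j ≠ (e j).2 → e j ∉ S b := by
        intro hcj hmem
        have : e j ∈ U := by
          rw [← hTu]
          exact Finset.mem_inter.2 ⟨heT j, hmem⟩
        obtain ⟨j', hj', hej'⟩ := Finset.mem_image.1 this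
        cases heinj hej'
        exact hcj (Finset.mem_filter.1 hj').2
      have hprod : e j = ((e j).1, (e j).2) := rfl
      constructor
      · intro hcj
        cases hs : (e j).2
        · -- c j = true, sign = false : e j ∉ S b
          have hne : c j ≠ (e j).2 := by rw [hcj, hs]; simp
          have hnot := hjnotel hne
          rw [hprod, hs] at hnot
          simp only [hrr, hxx, hs]
          rw [if_neg Bool.false_ne_true]
          cases hbi : b (e j).1
          · have h2 := (hprop b (e j).1).2 hbi
            have := abs_le.1 h2
            linarith [this.1]
          · rcases hone b (e j).1 hbi with hin | hin
            · have hle := ((hmemS b _).1 hin).2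
              rw [if_pos rfl] at hle
              have hri := hr (e j).1
              linarith
            · exact absurd hin hnot
        · have hin := hjel (by rw [hcj, hs])
          rw [hprod, hs] at hin
          have hle := ((hmemS b _).1 hin).2
          rw [if_pos rfl] at hle
          simp only [hrr, hxx, hs]
          rw [if_pos trivial]
          linarith
      · intro hcj
        cases hs : (e j).2
        · have hin := hjel (by rw [hcj, hs])
          rw [hprod, hs] at hin
          have hle := ((hmemS b _).1 hin).2
          rw [if_neg Bool.false_ne_true] at hle
          simp only [hrr, hxx, hs]
          rw [if_neg Bool.false_ne_true]
          linarith
        · -- c j = false, sign = true : e j ∉ S b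
          have hne : c j ≠ (e j).2 := by rw [hcj, hs]; simp
          have hnot := hjnotel hne
          rw [hprod, hs] at hnot
          simp only [hrr, hxx, hs]
          rw [if_pos trivial]
          cases hbi : b (e j).1
          · have h2 := (hprop b (e j).1).2 hbi
            have := abs_le.1 h2
            linarith [this.2]
          · rcases hone b (e j).1 hbi with hin | hin
            · exact absurd hin hnot
            · have hle := ((hmemS b _).1 hin).2
              rw [if_neg Bool.false_ne_true] at hle
              have hri := hr (e j).1
              linarith
    have hxxinj : Function.Injective xx := by
      intro j j' hjj'
      by_contra hne
      obtain ⟨g, -, hg⟩ := helper (fun j'' => decide (j'' = j))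
      obtain ⟨g', -, hg'⟩ := helper (fun j'' => decide (j'' = j'))
      have e1 := (hg j).1 (by simp)
      have e2 := (hg j').2 (by simp [Ne.symm hne])
      have e3 := (hg' j').1 (by simp)
      have e4 := (hg' j).2 (by simp [hne])
      rw [hjj'] at e1 e4
      linarith
    exact ⟨xx, hxxinj, rr, helper⟩
  -- counting
  have hvc : 𝒜.vcDim ≤ d := by
    refine Finset.sup_le fun T hT => ?_
    exact le_csSup hbdd (key T (Finset.mem_shatterer.1 hT))
  have hN : Fintype.card (Fin m × Bool) = 2 * m := by simp [mul_comm]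
  have hsauer : (2:ℕ) ^ m ≤ ∑ k ∈ Finset.Iic d, (2 * m).choose k := by
    calc (2:ℕ) ^ m = 𝒜.card := hcard𝒜.symm
      _ ≤ 𝒜.shatterer.card := 𝒜.card_le_card_shatterer
      _ ≤ ∑ k ∈ Finset.Iic 𝒜.vcDim, (Fintype.card (Fin m × Bool)).choose k :=
          Finset.card_shatterer_le_sum_vcDim
      _ ≤ ∑ k ∈ Finset.Iic d, (Fintype.card (Fin m × Bool)).choose k :=
          Finset.sum_le_sum_of_subset (Finset.Iic_subset_Iic.2 hvc)
      _ = ∑ k ∈ Finset.Iic d, (2 * m).choose k := by rw [hN]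
  have hfinal : (2:ℕ) ^ m * 16 ^ (2 * m - d) ≤ 17 ^ (2 * m) := by
    calc (2:ℕ) ^ m * 16 ^ (2 * m - d)
        ≤ (∑ k ∈ Finset.Iic d, (2 * m).choose k) * 16 ^ (2 * m - d) :=
          Nat.mul_le_mul_right _ hsauer
      _ ≤ 17 ^ (2 * m) := my_sum_choose_bound (2 * m) d (by omega)
  exact absurd hfinal (not_le.2 (my_arith m d hm8))
end

section
/- Let H ⊆ ℝ^X be a real-valued function class such that the L2 loss class L²_H = {(x,y) ↦ (h(x) − y)² : h ∈ H} is bounded by M (i.e., |h(x) − y| ≤ M on the relevant domain). Then fat_γ(L²_H) ≤ 8·fat_{γ/(2M)}(H) for every γ > 0. -/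
/-- The `L²` loss class of `H` on `X × Y`, where `Y` embeds in `ℝ` via `yval`. -/
def l2LossClass {X Y : Type*} (H : Set (X → ℝ)) (yval : Y → ℝ) : Set (X × Y → ℝ) :=
  (fun h => fun p => (h p.1 - yval p.2) ^ 2) '' H

/-!
Since `(h x - y)² = |h x - y|²`, the loss class is `(|H^Δ|)²`. If `f²` γ-shatters with shifts `r i`
and `0 ≤ f ≤ M`, then `f` shatters with shifts `√(r i)` at margin `γ / (2M)`, because
`b² - a² ≤ 2M (b - a)`. A pattern of `|g|` with shifts `r` is encoded by the set of doubled points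
`(i, ±)` where `±g (x i) ≥ r i + γ`; these `2^m` subsets of a `2m`-point set have VC dimension at
most fat_γ(H^Δ) ≤ fat_γ(H), so Sauer–Shelah forces `m ≤ 8 · fat_γ(H)`.
-/

open Finset

theorem Nat.sum_choose_Iic_lt_two_pow {d m : ℕ} (h : 8 * d < m) :
    ∑ k ∈ Iic d, (2 * m).choose k < 2 ^ m := by
  -- weight the `k`-th term by `8 ^ (2m - k)` and compare with `(1 + 8) ^ (2m)`;
  -- the margin `m > 8d` is what makes `81 ^ 8 < 2 ^ 53` suffice
  have weighted : (∑ k ∈ Iic d, (2 * m).choose k) * 8 ^ (2 * m - d) ≤ 9 ^ (2 * m) :=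
    calc (∑ k ∈ Iic d, (2 * m).choose k) * 8 ^ (2 * m - d)
        ≤ ∑ k ∈ Iic d, (2 * m).choose k * 8 ^ (2 * m - k) := by
          rw [sum_mul]
          gcongr with k hk
          · norm_num
          · have := mem_Iic.1 hk; omega
      _ ≤ ∑ k ∈ range (2 * m + 1), (2 * m).choose k * 8 ^ (2 * m - k) := by
          refine sum_le_sum_of_subset fun k hk => ?_
          simp only [mem_Iic, mem_range] at hk ⊢
          omega
      _ = 9 ^ (2 * m) := by
          rw [show (9 : ℕ) = 1 + 8 by norm_num, add_pow]
          simp [mul_comm]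
  have growth : 9 ^ (2 * m) < 2 ^ m * 8 ^ (2 * m - d) := by
    have h9 : 9 ^ (2 * m) = 3 ^ (4 * m) := by
      rw [show (9 : ℕ) = 3 ^ 2 by norm_num, ← pow_mul]; ring_nf
    have h2 : 2 ^ m * 8 ^ (2 * m - d) = 2 ^ (7 * m - 3 * d) := by
      rw [show (8 : ℕ) = 2 ^ 3 by norm_num, ← pow_mul, ← pow_add]; congr 1; omega
    rw [h9, h2, ← Nat.pow_lt_pow_iff_left (n := 8) (by norm_num), ← pow_mul, ← pow_mul]
    calc 3 ^ (4 * m * 8) = (3 ^ 32) ^ m := by rw [← pow_mul]; ring_nf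
      _ < (2 ^ 53) ^ m := Nat.pow_lt_pow_left (by norm_num) (by omega)
      _ = 2 ^ (53 * m) := by rw [← pow_mul, mul_comm]
      _ ≤ 2 ^ ((7 * m - 3 * d) * 8) := Nat.pow_le_pow_right (by norm_num) (by omega)
  exact Nat.lt_of_mul_lt_mul_right (weighted.trans_lt growth)

theorem Finset.le_eight_mul_vcDim {α : Type*} [Fintype α] [DecidableEq α]
    {𝒜 : Finset (Finset α)} {m : ℕ} (hα : Fintype.card α = 2 * m) (h𝒜 : 2 ^ m ≤ #𝒜) :
    m ≤ 8 * 𝒜.vcDim := by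
  by_contra! hm
  have := calc 2 ^ m ≤ #𝒜 := h𝒜
    _ ≤ #𝒜.shatterer := card_le_card_shatterer _
    _ ≤ ∑ k ∈ Iic 𝒜.vcDim, (2 * m).choose k := hα ▸ card_shatterer_le_sum_vcDim
  exact this.not_gt (Nat.sum_choose_Iic_lt_two_pow hm)

section

variable {X : Type*}

theorem fatShatters_of_forall_pattern {ι : Type*} [Fintype ι] {F : Set (X → ℝ)} {γ : ℝ}
    (hγ : 0 < γ) (z : ι → X) (ρ : ι → ℝ)
    (h : ∀ c : ι → Bool, ∃ f ∈ F, ∀ j,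
      (c j = true → ρ j + γ ≤ f (z j)) ∧ (c j = false → f (z j) ≤ ρ j - γ)) :
    FatShatters F γ (Fintype.card ι) := by
  classical
  -- two coinciding points would have to be separated in both directions
  have hz : Function.Injective z := by
    intro j j' hjj'
    by_contra hne
    obtain ⟨f, -, hf⟩ := h fun k => decide (k = j)
    obtain ⟨f', -, hf'⟩ := h fun k => decide (k = j')
    have := (hf j).1 (by simp)
    have := (hf j').2 (by simp [Ne.symm hne])
    have := (hf' j').1 (by simp)
    have := (hf' j).2 (by simp [hne])
    rw [hjj'] at *
    linarith
  let e := Fintype.equivFin ι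
  refine ⟨z ∘ e.symm, hz.comp e.symm.injective, ρ ∘ e.symm, fun b => ?_⟩
  obtain ⟨f, hf, hfb⟩ := h (b ∘ e)
  exact ⟨f, hf, fun i => by simpa using hfb (e.symm i)⟩

/-- The class `H^Δ = {(x, y) ↦ h x - y : h ∈ H}`. -/
def diffClass {Y : Type*} (H : Set (X → ℝ)) (yval : Y → ℝ) : Set (X × Y → ℝ) :=
  (fun h p => h p.1 - yval p.2) '' H

theorem FatShatters.of_diffClass {Y : Type*} {H : Set (X → ℝ)} {yval : Y → ℝ} {γ : ℝ} {m : ℕ}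
    (hγ : 0 < γ) (hs : FatShatters (diffClass H yval) γ m) : FatShatters H γ m := by
  obtain ⟨x, -, r, hr⟩ := hs
  simpa using fatShatters_of_forall_pattern hγ (fun i => (x i).1) (fun i => r i + yval (x i).2)
    fun b => by
      obtain ⟨-, ⟨h, hh, rfl⟩, hb⟩ := hr b
      exact ⟨h, hh, fun i => ⟨fun hi => by linarith [(hb i).1 hi],
        fun hi => by linarith [(hb i).2 hi]⟩⟩

lemma add_div_le_of_sq_add_le {a b M γ : ℝ} (hM : 0 < M) (hγ : 0 ≤ γ) (hb₀ : 0 ≤ b) (hb : b ≤ M)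
    (h : a ^ 2 + γ ≤ b ^ 2) : a + γ / (2 * M) ≤ b := by
  have hab : a ≤ b := by nlinarith
  rw [← le_sub_iff_add_le', div_le_iff₀ (by positivity)]
  nlinarith

theorem FatShatters.of_sq_image {F : Set (X → ℝ)} {M γ : ℝ} {m : ℕ} (hM : 0 < M) (hγ : 0 ≤ γ)
    (hF : ∀ f ∈ F, ∀ x, 0 ≤ f x ∧ f x ≤ M) (hs : FatShatters ((· ^ 2) '' F) γ m) :
    FatShatters F (γ / (2 * M)) m := by
  obtain ⟨x, hx, r, hr⟩ := hs
  have hw : ∀ b : Fin m → Bool, ∃ f ∈ F, ∀ i,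
      (b i = true → r i + γ ≤ f (x i) ^ 2) ∧ (b i = false → f (x i) ^ 2 ≤ r i - γ) := by
    intro b
    obtain ⟨-, ⟨f, hf, rfl⟩, hb⟩ := hr b
    exact ⟨f, hf, hb⟩
  have hr0 : ∀ i, 0 ≤ r i := fun i => by
    obtain ⟨f, -, hf⟩ := hw fun _ => false
    nlinarith [(hf i).2 rfl]
  have hrM : ∀ i, √(r i) ≤ M := fun i => by
    obtain ⟨f, hfF, hf⟩ := hw fun _ => true
    rw [Real.sqrt_le_left hM.le]
    nlinarith [(hf i).1 rfl, hF f hfF (x i)]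
  refine ⟨x, hx, fun i => √(r i), fun b => ?_⟩
  obtain ⟨f, hfF, hf⟩ := hw b
  refine ⟨f, hfF, fun i => ⟨fun hi => ?_, fun hi => ?_⟩⟩
  · refine add_div_le_of_sq_add_le hM hγ (hF f hfF (x i)).1 (hF f hfF (x i)).2 ?_
    rw [Real.sq_sqrt (hr0 i)]
    exact (hf i).1 hi
  · refine le_sub_iff_add_le.2 (add_div_le_of_sq_add_le hM hγ (Real.sqrt_nonneg _) (hrM i) ?_)
    rw [Real.sq_sqrt (hr0 i)]
    linarith [(hf i).2 hi]

section SignedExceedSet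

variable {m : ℕ} (x : Fin m → X) (r : Fin m → ℝ) (γ : ℝ) (f : X → ℝ)

open Classical in
noncomputable def signedExceedSet : Finset (Fin m × Bool) :=
  {p | if p.2 then r p.1 + γ ≤ f (x p.1) else f (x p.1) ≤ -(r p.1 + γ)}

variable {x r γ f}

@[simp]
lemma mem_signedExceedSet_true {i : Fin m} :
    (i, true) ∈ signedExceedSet x r γ f ↔ r i + γ ≤ f (x i) := by
  simp [signedExceedSet]

@[simp]
lemma mem_signedExceedSet_false {i : Fin m} :
    (i, false) ∈ signedExceedSet x r γ f ↔ f (x i) ≤ -(r i + γ) := by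
  simp [signedExceedSet]

lemma signedExceedSet_ne {f' : X → ℝ} {i : Fin m} (hγ : 0 < γ) (hf : r i + γ ≤ |f (x i)|)
    (hf' : |f' (x i)| ≤ r i - γ) : signedExceedSet x r γ f ≠ signedExceedSet x r γ f' := by
  intro h
  rcases le_abs'.1 hf with hneg | hpos
  · have := mem_signedExceedSet_false.1 (h ▸ mem_signedExceedSet_false.2 (by linarith))
    linarith [neg_abs_le (f' (x i))]
  · have := mem_signedExceedSet_true.1 (h ▸ mem_signedExceedSet_true.2 hpos)
    linarith [le_abs_self (f' (x i))]

lemma pattern_of_mem_signedExceedSet_iff {i : Fin m} (hr : 0 ≤ r i)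
    (hf : |f (x i)| ≤ r i - γ ∨ r i + γ ≤ |f (x i)|) {σ c : Bool}
    (h : (i, σ) ∈ signedExceedSet x r γ f ↔ c = σ) :
    (c = true → (if σ then r i else -r i) + γ ≤ f (x i)) ∧
      (c = false → f (x i) ≤ (if σ then r i else -r i) - γ) := by
  cases σ <;> cases c <;>
    simp only [mem_signedExceedSet_true, mem_signedExceedSet_false, Bool.false_eq_true,
      Bool.true_eq_false, iff_true, iff_false, not_le, ↓reduceIte, forall_const,
      IsEmpty.forall_iff, true_and, and_true] at h ⊢ <;>
    cases abs_cases (f (x i)) <;> rcases hf with hf | hf <;> linarith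

end SignedExceedSet

theorem fatShatters_of_shatters_signedExceedSet {G : Set (X → ℝ)} {γ : ℝ} {m : ℕ}
    {x : Fin m → X} {r : Fin m → ℝ} {w : (Fin m → Bool) → X → ℝ} (hγ : 0 < γ)
    (hr : ∀ i, 0 ≤ r i) (hwG : ∀ b, w b ∈ G)
    (hw : ∀ b i, |w b (x i)| ≤ r i - γ ∨ r i + γ ≤ |w b (x i)|) {s : Finset (Fin m × Bool)}
    (hs : (univ.image fun b => signedExceedSet x r γ (w b)).Shatters s) :
    FatShatters G γ #s := by
  classical
  rw [← Fintype.card_coe]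
  refine fatShatters_of_forall_pattern hγ (fun p : s => x p.1.1)
    (fun p => if p.1.2 then r p.1.1 else -r p.1.1) fun c => ?_
  obtain ⟨u, hu, hsu⟩ := hs (filter_subset (fun p => ∀ hp : p ∈ s, c ⟨p, hp⟩ = p.2) s)
  obtain ⟨b, -, rfl⟩ := mem_image.1 hu
  refine ⟨w b, hwG b, fun p => pattern_of_mem_signedExceedSet_iff (hr _) (hw b _) ?_⟩
  simpa [p.2] using congrArg (p.1 ∈ ·) hsu

theorem le_eight_mul_of_fatShatters_abs_image {G : Set (X → ℝ)} {γ : ℝ} {m d : ℕ} (hγ : 0 < γ)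
    (hd : ∀ n, FatShatters G γ n → n ≤ d) (hs : FatShatters ((|·|) '' G) γ m) : m ≤ 8 * d := by
  classical
  obtain ⟨x, -, r, hr⟩ := hs
  have hw : ∀ b : Fin m → Bool, ∃ g ∈ G, ∀ i,
      (b i = true → r i + γ ≤ |g (x i)|) ∧ (b i = false → |g (x i)| ≤ r i - γ) := by
    intro b
    obtain ⟨-, ⟨g, hg, rfl⟩, hb⟩ := hr b
    exact ⟨g, hg, hb⟩
  choose w hwG hw using hw
  have hr0 : ∀ i, 0 ≤ r i := fun i => by
    linarith [abs_nonneg (w (fun _ => false) (x i)), (hw (fun _ => false) i).2 rfl]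
  have hsep : ∀ b i, |w b (x i)| ≤ r i - γ ∨ r i + γ ≤ |w b (x i)| := fun b i => by
    cases hb : b i
    exacts [Or.inl ((hw b i).2 hb), Or.inr ((hw b i).1 hb)]
  have hinj : Function.Injective fun b => signedExceedSet x r γ (w b) := by
    intro b b' hbb'
    funext i
    cases hb : b i <;> cases hb' : b' i
    exacts [rfl, (signedExceedSet_ne hγ ((hw b' i).1 hb') ((hw b i).2 hb) hbb'.symm).elim,
      (signedExceedSet_ne hγ ((hw b i).1 hb) ((hw b' i).2 hb') hbb').elim, rfl]
  let 𝒜 := univ.image fun b => signedExceedSet x r γ (w b)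
  have h𝒜 : #𝒜 = 2 ^ m := by simp [𝒜, card_image_of_injective _ hinj]
  calc m ≤ 8 * 𝒜.vcDim := le_eight_mul_vcDim (by simp [mul_comm]) h𝒜.ge
    _ ≤ 8 * d := Nat.mul_le_mul_left _ <| Finset.sup_le fun s hs =>
      hd _ (fatShatters_of_shatters_signedExceedSet hγ hr0 hwG hsep (mem_shatterer.1 hs))

lemma l2LossClass_eq_sq_abs_diffClass {Y : Type*} (H : Set (X → ℝ)) (yval : Y → ℝ) :
    l2LossClass H yval = (· ^ 2) '' ((|·|) '' diffClass H yval) := by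
  simp only [l2LossClass, diffClass, Set.image_image]
  congr! with h p
  simp

end

theorem fat_l2LossClass_le {X Y : Type*} (H : Set (X → ℝ)) (yval : Y → ℝ)
    (M γ : ℝ) (hM : 0 < M) (hγ : 0 < γ)
    (hbound : ∀ h ∈ H, ∀ (x : X) (y : Y), |h x - yval y| ≤ M)
    (hbdd : BddAbove {m | FatShatters H (γ / (2 * M)) m}) :
    ∀ m : ℕ, FatShatters (l2LossClass H yval) γ m →
      m ≤ 8 * fatDim H (γ / (2 * M)) := by
  intro m hm
  have hγM : 0 < γ / (2 * M) := by positivity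
  have habs_bdd : ∀ g ∈ (|·|) '' diffClass H yval, ∀ p, 0 ≤ g p ∧ g p ≤ M := by
    rintro _ ⟨_, ⟨h, hh, rfl⟩, rfl⟩ p
    exact ⟨abs_nonneg _, hbound h hh p.1 p.2⟩
  rw [l2LossClass_eq_sq_abs_diffClass] at hm
  refine le_eight_mul_of_fatShatters_abs_image hγM (fun n hn => ?_)
    (hm.of_sq_image hM hγ.le habs_bdd)
  exact le_csSup hbdd (hn.of_diffClass hγM)
end

section
/- Let H be the class of homogeneous linear functions x ↦ ⟨w, x⟩ on the unit ball of ℝ^m with ‖w‖ ≤ 1. Then for every δ > 0, fat_δ(H) ≤ 1/δ². -/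
open Finset

noncomputable def eps : Bool → ℝ := fun c => if c then 1 else -1

lemma eps_not (c : Bool) : eps (!c) = - eps c := by cases c <;> simp [eps]

lemma eps_mul_self (c : Bool) : eps c * eps c = 1 := by cases c <;> norm_num [eps]

lemma sum_eps_mul_eq_zero {n : ℕ} (i j : Fin n) (hij : i ≠ j) :
    ∑ b : Fin n → Bool, eps (b i) * eps (b j) = 0 := by
  apply Finset.sum_ninvolution (fun b => Function.update b i (!b i))
  · intro b
    rw [Function.update_self, Function.update_of_ne (Ne.symm hij), eps_not]
    ring
  · intro b _ hcontra
    have := congrFun hcontra i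
    rw [Function.update_self] at this
    exact (Bool.not_ne_self (b i)) this
  · intro b; exact Finset.mem_univ _
  · intro b
    funext k
    by_cases hk : k = i
    · subst hk; simp [Function.update_self]
    · simp [Function.update_of_ne hk]

lemma sum_norm_sq_rademacher {m n : ℕ} (y : Fin n → EuclideanSpace ℝ (Fin m)) :
    ∑ b : Fin n → Bool, ‖∑ i, eps (b i) • y i‖ ^ 2
      = 2 ^ n * ∑ i, ‖y i‖ ^ 2 := by
  have expand : ∀ b : Fin n → Bool, ‖∑ i, eps (b i) • y i‖ ^ 2
      = ∑ i, ∑ j, (eps (b i) * eps (b j)) * @inner ℝ _ _ (y i) (y j) := by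
    intro b
    rw [← real_inner_self_eq_norm_sq, sum_inner]
    refine Finset.sum_congr rfl fun i _ => ?_
    rw [inner_sum]
    refine Finset.sum_congr rfl fun j _ => ?_
    rw [real_inner_smul_left, real_inner_smul_right]
    ring
  simp only [expand]
  rw [Finset.sum_comm]
  have : ∀ i : Fin n, ∑ b : Fin n → Bool, ∑ j,
      (eps (b i) * eps (b j)) * @inner ℝ _ _ (y i) (y j) = 2 ^ n * ‖y i‖ ^ 2 := by
    intro i
    rw [Finset.sum_comm]
    have split : ∀ j : Fin n, ∑ b : Fin n → Bool,
        (eps (b i) * eps (b j)) * @inner ℝ _ _ (y i) (y j)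
        = (∑ b : Fin n → Bool, eps (b i) * eps (b j)) * @inner ℝ _ _ (y i) (y j) := by
      intro j; rw [Finset.sum_mul]
    simp only [split]
    rw [Finset.sum_eq_single i]
    · have : ∑ b : Fin n → Bool, eps (b i) * eps (b i) = 2 ^ n := by
        simp only [eps_mul_self]
        simp [Finset.card_univ]
      rw [this, real_inner_self_eq_norm_sq]
    · intro j _ hj
      rw [sum_eps_mul_eq_zero i j (Ne.symm hj), zero_mul]
    · intro h; exact absurd (Finset.mem_univ i) h
  rw [Finset.sum_congr rfl fun i _ => this i, ← Finset.mul_sum]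

theorem fat_linear_class {m : ℕ} (δ : ℝ) (hδ : 0 < δ) :
    ∀ n : ℕ,
      FatShatters
        {f : {x : EuclideanSpace ℝ (Fin m) // ‖x‖ ≤ 1} → ℝ |
          ∃ w : EuclideanSpace ℝ (Fin m), ‖w‖ ≤ 1 ∧
            f = fun x => @inner ℝ _ _ w x.1} δ n →
      (n : ℝ) ≤ 1 / δ ^ 2 := by
  intro n hsh
  obtain ⟨x, -, r, hr⟩ := hsh
  set y : Fin n → EuclideanSpace ℝ (Fin m) := fun i => (x i).1 with hy
  set S : (Fin n → Bool) → EuclideanSpace ℝ (Fin m) :=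
    fun b => ∑ i, eps (b i) • y i with hS
  -- key pointwise bound: for each b, Σ eps(b i) r i + n δ ≤ ‖S b‖  (via some w)
  have key : ∀ b : Fin n → Bool, (∑ i, eps (b i) * r i) + n * δ ≤ ‖S b‖ := by
    intro b
    obtain ⟨f, hf, hfb⟩ := hr b
    obtain ⟨w, hw, rfl⟩ := hf
    have hterm : ∀ i, eps (b i) * r i + δ ≤ eps (b i) * @inner ℝ _ _ w (y i) := by
      intro i
      cases h : b i with
      | false =>
          have hle : @inner ℝ _ _ w (y i) ≤ r i - δ := (hfb i).2 h
          have he : eps false = -1 := by norm_num [eps]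
          rw [he, neg_one_mul, neg_one_mul]
          linarith
      | true =>
          have hle : r i + δ ≤ @inner ℝ _ _ w (y i) := (hfb i).1 h
          have he : eps true = 1 := by norm_num [eps]
          rw [he, one_mul, one_mul]
          linarith
    have hinner : (∑ i, eps (b i) * r i) + n * δ ≤ @inner ℝ _ _ w (S b) := by
      rw [hS]
      simp only [inner_sum, real_inner_smul_right]
      calc (∑ i, eps (b i) * r i) + n * δ = ∑ i : Fin n, (eps (b i) * r i + δ) := by
            rw [Finset.sum_add_distrib]; simp [mul_comm]
        _ ≤ ∑ i, eps (b i) * @inner ℝ _ _ w (y i) := Finset.sum_le_sum fun i _ => hterm i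
    calc (∑ i, eps (b i) * r i) + n * δ ≤ @inner ℝ _ _ w (S b) := hinner
      _ ≤ ‖w‖ * ‖S b‖ := real_inner_le_norm w (S b)
      _ ≤ 1 * ‖S b‖ := by
          apply mul_le_mul_of_nonneg_right hw (norm_nonneg _)
      _ = ‖S b‖ := one_mul _
  -- hence n δ ≤ ‖S b‖ for all b
  have key2 : ∀ b : Fin n → Bool, (n : ℝ) * δ ≤ ‖S b‖ := by
    intro b
    have h1 := key b
    have h2 := key (fun i => !b i)
    have hSneg : S (fun i => !b i) = - S b := by
      rw [hS]
      simp only [eps_not, neg_smul]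
      rw [← Finset.sum_neg_distrib]
    rw [hSneg, norm_neg] at h2
    have hsum : ∑ i, eps (!b i) * r i = - ∑ i, eps (b i) * r i := by
      simp only [eps_not]
      rw [← Finset.sum_neg_distrib]
      simp [neg_mul]
    rw [hsum] at h2
    linarith
  -- sum the squares
  have hsq : ∀ b : Fin n → Bool, ((n : ℝ) * δ) ^ 2 ≤ ‖S b‖ ^ 2 := fun b =>
    pow_le_pow_left₀ (by positivity) (key2 b) 2
  have hsum1 : (2 : ℝ) ^ n * ((n : ℝ) * δ) ^ 2 ≤ ∑ b : Fin n → Bool, ‖S b‖ ^ 2 := by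
    calc (2 : ℝ) ^ n * ((n : ℝ) * δ) ^ 2
        = ∑ _b : Fin n → Bool, ((n : ℝ) * δ) ^ 2 := by
          rw [Finset.sum_const, Finset.card_univ]
          simp [nsmul_eq_mul]
      _ ≤ ∑ b : Fin n → Bool, ‖S b‖ ^ 2 := Finset.sum_le_sum fun b _ => hsq b
  have hsum2 : ∑ b : Fin n → Bool, ‖S b‖ ^ 2 ≤ (2 : ℝ) ^ n * n := by
    rw [hS]
    rw [sum_norm_sq_rademacher y]
    have : ∑ i : Fin n, ‖y i‖ ^ 2 ≤ (n : ℝ) := by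
      calc ∑ i : Fin n, ‖y i‖ ^ 2 ≤ ∑ _i : Fin n, (1 : ℝ) :=
            Finset.sum_le_sum fun i _ => by
              have := (x i).2
              calc ‖y i‖ ^ 2 ≤ 1 ^ 2 := pow_le_pow_left₀ (norm_nonneg _) this 2
                _ = 1 := one_pow 2
        _ = n := by simp
    have h2pos : (0 : ℝ) < 2 ^ n := by positivity
    nlinarith
  have hfinal : ((n : ℝ) * δ) ^ 2 ≤ (n : ℝ) := by
    have h2pos : (0 : ℝ) < 2 ^ n := by positivity
    nlinarith
  rcases Nat.eq_zero_or_pos n with rfl | hn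
  · simp; positivity
  · have hnpos : (0 : ℝ) < n := by exact_mod_cast hn
    rw [le_div_iff₀ (by positivity)]
    nlinarith
end
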